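/- Let A, B be deterministic row-vectors of dimension m of boolean series over a structured alphabet W and let 1 ≤ j₀ ≤ m. Define C = A ∇_{j₀} B componentwise by c_j = a_j + a_{j₀}·b_j for j ≠ j₀ and c_{j₀} = ∅. Then C is a deterministic row-vector and ‖C‖ ≤ ‖A‖ + ‖B‖. -/
import Mathlib


/-- Left-quotient (residual) of a boolean series (language) by a word. -/
def lq {W : Type*} (S : Language W) (u : List W) : Language W := {w | u ++ w ∈ S}

/-- Componentwise left-quotient of a row-vector of series. -/
def lqVec {W : Type*} {n : ℕ} (S : Fin n → Language W) (u : List W) :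
    Fin n → Language W := fun j => lq (S j) u

/-- A row-vector of series is left-deterministic over the structured alphabet `(W, r)`:
it is the zero vector, or a unit vector, or all words occurring in any component
start with `r`-equivalent letters. -/
def LeftDetVec {W : Type*} (r : W → W → Prop) {n : ℕ} (S : Fin n → Language W) : Prop :=
  (∀ j, S j = 0) ∨
  (∃ j0, S j0 = 1 ∧ ∀ j, j ≠ j0 → S j = 0) ∨
  (∀ j j' w w', w ∈ S j → w' ∈ S j' →
    ∃ (a a' : W) (t t' : List W), w = a :: t ∧ w' = a' :: t' ∧ r a a')

/-- A row-vector is deterministic iff all its componentwise left-quotients are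
left-deterministic. -/
def DetVec {W : Type*} (r : W → W → Prop) {n : ℕ} (S : Fin n → Language W) : Prop :=
  ∀ u : List W, LeftDetVec r (lqVec S u)

/-- A matrix of series is deterministic iff each of its rows is. -/
def DetMat {W : Type*} (r : W → W → Prop) {n m : ℕ}
    (M : Fin n → Fin m → Language W) : Prop :=
  ∀ i, DetVec r (M i)

/-- Matrix product of matrices of boolean series. -/
def matMul {W : Type*} {n m s : ℕ} (A : Fin n → Fin m → Language W)
    (B : Fin m → Fin s → Language W) : Fin n → Fin s → Language W :=
  fun i j => ∑ k, A i k * B k j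

/-- Row-vector times matrix. -/
def vecMulMat {W : Type*} {m s : ℕ} (A : Fin m → Language W)
    (B : Fin m → Fin s → Language W) : Fin s → Language W :=
  fun j => ∑ k, A k * B k j

/-- Set of row-residuals of a matrix of series. -/
def rowResiduals {W : Type*} {n m : ℕ} (M : Fin n → Fin m → Language W) :
    Set (Fin m → Language W) :=
  {T | ∃ (i : Fin n) (u : List W), T = lqVec (M i) u}

/-- The norm of a matrix: the (extended) number of its row-residuals. -/
noncomputable def normMat {W : Type*} {n m : ℕ} (M : Fin n → Fin m → Language W) : ℕ∞ :=
  (rowResiduals M).encard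

/-- Set of residuals of a row-vector of series. -/
def residualsVec {W : Type*} {n : ℕ} (S : Fin n → Language W) :
    Set (Fin n → Language W) :=
  {T | ∃ u : List W, T = lqVec S u}

/-- The norm of a row-vector: the (extended) number of its residuals. -/
noncomputable def normVec {W : Type*} {n : ℕ} (S : Fin n → Language W) : ℕ∞ :=
  (residualsVec S).encard

/-- The operation `A ∇_{j₀} B` on row-vectors:
`c_j = a_j + a_{j₀}·b_j` for `j ≠ j₀` and `c_{j₀} = ∅`. -/
def nabla {W : Type*} {m : ℕ} (A B : Fin m → Language W) (j0 : Fin m) :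
    Fin m → Language W :=
  fun j => if j = j0 then 0 else A j + A j0 * B j


namespace NablaAux

variable {W : Type*}

lemma mem_lq {S : Language W} {u w : List W} : w ∈ lq S u ↔ u ++ w ∈ S := Iff.rfl

lemma lq_nil (S : Language W) : lq S [] = S := rfl

lemma lq_append (S : Language W) (u v : List W) : lq S (u ++ v) = lq (lq S u) v := by
  ext w
  show (u ++ v) ++ w ∈ S ↔ u ++ (v ++ w) ∈ S
  rw [List.append_assoc]

lemma lq_zero (u : List W) : lq (0 : Language W) u = 0 := rfl

lemma lq_one_cons (a : W) (t : List W) : lq (1 : Language W) (a :: t) = 0 := by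
  ext w
  constructor
  · intro h
    have : (a :: t) ++ w = [] := (Language.mem_one _).mp h
    simp at this
  · intro h; exact h.elim

lemma lq_add (S T : Language W) (u : List W) : lq (S + T) u = lq S u + lq T u := by
  ext w
  show u ++ w ∈ S + T ↔ w ∈ lq S u + lq T u
  rw [Language.mem_add, Language.mem_add]
  exact Iff.rfl

lemma mem_lq_mul {S T : Language W} {u w : List W} :
    w ∈ lq (S * T) u ↔ (∃ x ∈ lq S u, ∃ y ∈ T, x ++ y = w) ∨
      (∃ u1 u2, u1 ++ u2 = u ∧ u1 ∈ S ∧ w ∈ lq T u2) := by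
  rw [mem_lq, Language.mem_mul]
  constructor
  · rintro ⟨x, hx, y, hy, hxy⟩
    rcases List.append_eq_append_iff.mp hxy with ⟨l, hul, hyl⟩ | ⟨l, hxl, hwl⟩
    · exact Or.inr ⟨x, l, hul.symm, hx, by rw [mem_lq, ← hyl]; exact hy⟩
    · refine Or.inl ⟨l, ?_, y, hy, hwl.symm⟩
      rw [mem_lq, ← hxl]; exact hx
  · rintro (⟨x, hx, y, hy, hxy⟩ | ⟨u1, u2, hu, h1, h2⟩)
    · exact ⟨u ++ x, hx, y, hy, by rw [← hxy, List.append_assoc]⟩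
    · exact ⟨u1, h1, u2 ++ w, h2, by rw [← List.append_assoc, hu]⟩

/-- The unit vector. -/
def unitV {m : ℕ} (j0 : Fin m) : Fin m → Language W := fun j => if j = j0 then 1 else 0

/-- Mask a component to zero. -/
def maskV {m : ℕ} (S : Fin m → Language W) (j0 : Fin m) : Fin m → Language W :=
  fun j => if j = j0 then 0 else S j

variable {r : W → W → Prop} {m : ℕ}

lemma unit_of_nil_mem {A : Fin m → Language W} {j0 : Fin m} (hA : DetVec r A)
    {u1 : List W} (h : u1 ∈ A j0) : lqVec A u1 = unitV j0 := by
  have hne : [] ∈ lqVec A u1 j0 := by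
    show u1 ++ [] ∈ A j0; rwa [List.append_nil]
  rcases hA u1 with h0 | ⟨j1, h1, h2⟩ | h3
  · rw [h0 j0] at hne; exact hne.elim
  · have hj : j0 = j1 := by
      by_contra hc
      rw [h2 j0 hc] at hne; exact hne.elim
    subst hj
    funext j
    by_cases hj : j = j0
    · subst hj; simp [unitV, h1]
    · simp [unitV, hj, h2 j hj]
  · obtain ⟨a, a', t, t', h, -, -⟩ := h3 j0 j0 [] [] hne hne
    exact absurd h (by simp)

lemma prefix_unique {A : Fin m → Language W} {j0 : Fin m} (hA : DetVec r A)
    {u1 v1 u2 v2 : List W} (h1 : u1 ∈ A j0) (h2 : v1 ∈ A j0)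
    (heq : u1 ++ u2 = v1 ++ v2) : u1 = v1 := by
  have key : ∀ {x y : List W}, x ∈ A j0 → y = x ++ y.drop x.length → x ++ (y.drop x.length) = y →
      True := fun _ _ _ => trivial
  rcases List.append_eq_append_iff.mp heq with ⟨l, hl, -⟩ | ⟨l, hl, -⟩
  · have : l ∈ lqVec A u1 j0 := by show u1 ++ l ∈ A j0; rw [← hl]; exact h2
    rw [unit_of_nil_mem hA h1] at this
    simp only [unitV, if_pos rfl, Language.mem_one] at this
    rw [hl, this, List.append_nil]
  · have : l ∈ lqVec A v1 j0 := by show v1 ++ l ∈ A j0; rw [← hl]; exact h1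
    rw [unit_of_nil_mem hA h2] at this
    simp only [unitV, if_pos rfl, Language.mem_one] at this
    rw [hl, this, List.append_nil]

lemma leftdet_mask {S : Fin m → Language W} {j0 : Fin m} (h : LeftDetVec r S) :
    LeftDetVec r (maskV S j0) := by
  rcases h with h0 | ⟨j1, h1, h2⟩ | h3
  · left; intro j; simp [maskV, h0 j]
  · by_cases hj : j1 = j0
    · left; intro j
      by_cases hjj : j = j0
      · simp [maskV, hjj]
      · simp [maskV, hjj, h2 j (by rw [hj]; exact hjj)]
    · right; left
      refine ⟨j1, by simp [maskV, hj, h1], fun j hjne => ?_⟩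
      by_cases hjj : j = j0
      · simp [maskV, hjj]
      · simp [maskV, hjj, h2 j hjne]
  · right; right
    intro j j' w w' hw hw'
    have hw2 : w ∈ S j := by
      by_cases hjj : j = j0
      · simp [maskV, hjj] at hw
      · simpa [maskV, hjj] using hw
    have hw2' : w' ∈ S j' := by
      by_cases hjj : j' = j0
      · simp [maskV, hjj] at hw'
      · simpa [maskV, hjj] using hw'
    exact h3 j j' w w' hw2 hw2'

lemma leftdet_nabla {A B : Fin m → Language W} {j0 : Fin m}
    (hA : LeftDetVec r A) (hB : LeftDetVec r B) : LeftDetVec r (nabla A B j0) := by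
  rcases hA with h0 | ⟨j1, h1, h2⟩ | h3
  · left; intro j; simp [nabla, h0 j, h0 j0]
  · by_cases hj : j1 = j0
    · have : nabla A B j0 = maskV B j0 := by
        funext j
        by_cases hjj : j = j0
        · simp [nabla, maskV, hjj]
        · rw [hj] at h1
          simp [nabla, maskV, hjj, h2 j (by rw [hj]; exact hjj), h1]
      rw [this]; exact leftdet_mask hB
    · have : nabla A B j0 = A := by
        funext j
        by_cases hjj : j = j0
        · simp [nabla, hjj, (h2 j0 (fun h => hj h.symm)).symm]
        · simp [nabla, hjj, h2 j0 (fun h => hj h.symm)]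
      rw [this]; exact Or.inr (Or.inl ⟨j1, h1, h2⟩)
  · right; right
    have key : ∀ j w, w ∈ nabla A B j0 j →
        ∃ (a : W) (t : List W), w = a :: t ∧ ∃ (j₁ : Fin m) (t₁ : List W), a :: t₁ ∈ A j₁ := by
      intro j w hw
      by_cases hjj : j = j0
      · simp [nabla, hjj] at hw
      · simp only [nabla, if_neg hjj, Language.mem_add] at hw
        rcases hw with hw | hw
        · obtain ⟨a, a', t, t', hwa, -, -⟩ := h3 j j w w hw hw
          exact ⟨a, t, hwa, j, t, by rwa [← hwa]⟩
        · rw [Language.mem_mul] at hw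
          obtain ⟨x, hx, y, hy, hxy⟩ := hw
          obtain ⟨a, a', t, t', hxa, -, -⟩ := h3 j0 j0 x x hx hx
          exact ⟨a, t ++ y, by rw [← hxy, hxa]; rfl, j0, t, by rwa [← hxa]⟩
    intro j j' w w' hw hw'
    obtain ⟨a, t, hwa, j₁, t₁, ht₁⟩ := key j w hw
    obtain ⟨a', t', hwa', j₁', t₁', ht₁'⟩ := key j' w' hw'
    obtain ⟨b, b', s, s', hb, hb', hrb⟩ := h3 j₁ j₁' _ _ ht₁ ht₁'
    have e1 : a = b := (List.cons.inj hb).1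
    have e2 : a' = b' := (List.cons.inj hb').1
    exact ⟨a, a', t, t', hwa, hwa', by rw [e1, e2]; exact hrb⟩

end NablaAux

namespace NablaAux
variable {W : Type*} {r : W → W → Prop} {m : ℕ}

lemma lqVec_nabla_eq {A B : Fin m → Language W} {j0 : Fin m} (hA : DetVec r A)
    (u : List W) :
    lqVec (nabla A B j0) u = nabla (lqVec A u) B j0 ∨
      ∃ u2, (∃ u1, u1 ++ u2 = u ∧ u1 ∈ A j0) ∧
        lqVec (nabla A B j0) u = maskV (lqVec B u2) j0 := by
  by_cases hpre : ∃ u1 u2, u1 ++ u2 = u ∧ u1 ∈ A j0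
  · obtain ⟨u1, u2, huv, hu1⟩ := hpre
    right
    refine ⟨u2, ⟨u1, huv, hu1⟩, ?_⟩
    have hAu1 : lqVec A u1 = unitV j0 := unit_of_nil_mem hA hu1
    funext j
    by_cases hj : j = j0
    · show lq (nabla A B j0 j) u = _
      simp [nabla, maskV, hj, lq_zero]
    · show lq (nabla A B j0 j) u = _
      simp only [nabla, if_neg hj, maskV]
      rw [lq_add]
      have hAj : lq (A j) u = 0 := by
        rw [← huv, lq_append]
        have : lq (A j) u1 = unitV j0 j := congrFun hAu1 j
        rw [this]; simp [unitV, hj, lq_zero]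
      have hAj0 : lq (A j0) u = lq 1 u2 := by
        rw [← huv, lq_append]
        have : lq (A j0) u1 = unitV j0 j0 := congrFun hAu1 j0
        rw [this]; simp [unitV]
      have hprod : lq (A j0 * B j) u = lq (B j) u2 := by
        ext w
        rw [mem_lq_mul]
        constructor
        · rintro (⟨x, hx, y, hy, hxy⟩ | ⟨v1, v2, hv, hv1, hw⟩)
          · rw [hAj0] at hx
            cases u2 with
            | nil =>
              rw [lq_nil, Language.mem_one] at hx
              subst hx
              rw [List.nil_append] at hxy
              rw [lq_nil, ← hxy]; exact hy
            | cons a t =>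
              rw [lq_one_cons] at hx; exact hx.elim
          · have : v1 = u1 := prefix_unique hA hv1 hu1 (hv.trans huv.symm)
            subst this
            have : v2 = u2 := by
              have := hv.trans huv.symm
              exact List.append_cancel_left this
            rwa [this] at hw
        · intro hw
          exact Or.inr ⟨u1, u2, huv, hu1, hw⟩
      rw [hAj, hprod, zero_add]
      rfl
  · left
    funext j
    by_cases hj : j = j0
    · show lq (nabla A B j0 j) u = _
      simp [nabla, hj, lq_zero]
    · show lq (nabla A B j0 j) u = _
      simp only [nabla, if_neg hj]
      rw [lq_add]
      have hprod : lq (A j0 * B j) u = lq (A j0) u * B j := by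
        ext w
        rw [mem_lq_mul, Language.mem_mul]
        constructor
        · rintro (h | ⟨v1, v2, hv, hv1, -⟩)
          · exact h
          · exact absurd ⟨v1, v2, hv, hv1⟩ hpre
        · exact Or.inl
      rw [hprod]
      rfl

end NablaAux

open NablaAux in
theorem nabla_det_and_norm' {W : Type*} (r : W → W → Prop) (hr : Equivalence r)
    {m : ℕ} (A B : Fin m → Language W) (j0 : Fin m)
    (hA : DetVec r A) (hB : DetVec r B) :
    DetVec r (nabla A B j0) ∧ normVec (nabla A B j0) ≤ normVec A + normVec B := by
  have hBnil : LeftDetVec r B := by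
    have := hB []
    have h : lqVec B [] = B := funext fun j => lq_nil (B j)
    rwa [h] at this
  constructor
  · intro u
    rcases lqVec_nabla_eq (B := B) (j0 := j0) hA u with h | ⟨u2, -, h⟩
    · rw [h]; exact leftdet_nabla (hA u) hBnil
    · rw [h]; exact leftdet_mask (hB u2)
  · have hsub : residualsVec (nabla A B j0) ⊆
        (fun S => nabla S B j0) '' residualsVec A ∪ (fun S => maskV S j0) '' residualsVec B := by
      rintro T ⟨u, rfl⟩
      rcases lqVec_nabla_eq (B := B) (j0 := j0) hA u with h | ⟨u2, -, h⟩
      · exact Or.inl ⟨lqVec A u, ⟨u, rfl⟩, h.symm⟩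
      · exact Or.inr ⟨lqVec B u2, ⟨u2, rfl⟩, h.symm⟩
    calc (residualsVec (nabla A B j0)).encard
        ≤ ((fun S => nabla S B j0) '' residualsVec A ∪
            (fun S => maskV S j0) '' residualsVec B).encard := Set.encard_mono hsub
      _ ≤ ((fun S => nabla S B j0) '' residualsVec A).encard +
            ((fun S => maskV S j0) '' residualsVec B).encard := Set.encard_union_le _ _
      _ ≤ (residualsVec A).encard + (residualsVec B).encard :=
            add_le_add (Set.encard_image_le _ _) (Set.encard_image_le _ _)

/-- If `A`, `B` are deterministic row-vectors over a structured alphabet and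
`j₀` an index, then `A ∇_{j₀} B` is deterministic and `‖A ∇_{j₀} B‖ ≤ ‖A‖ + ‖B‖`. -/
theorem nabla_det_and_norm {W : Type*} (r : W → W → Prop) (hr : Equivalence r)
    {m : ℕ} (A B : Fin m → Language W) (j0 : Fin m)
    (hA : DetVec r A) (hB : DetVec r B) :
    DetVec r (nabla A B j0) ∧ normVec (nabla A B j0) ≤ normVec A + normVec B := nabla_det_and_norm' r hr A B j0 hA hB
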